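/- Suppose q : ℝ → ℂ solves (E+), and suppose there exist a real number λ > 0 and constants B, u_0 > 0 such that |q(u)| ≤ B·e^{λu} for all u ≥ u_0. Then there exists a complex number A such that q(u)·u^{−β} → A as the real variable u → ∞ (u^{−β} the complex power of the positive real u). -/

import Mathlib

/-!
Put `f u = q u * u ^ (-β)`. Because `β = ∑ αⱼ`, the equation says exactly that `f - W` has
derivative `ψ`, where `W u = ∑ αⱼ ∫_u^{u+vⱼ} t^(-β-1) q t dt` (`shiftWindow`) and
`ψ u = ∑ αⱼ q (u+vⱼ) (u^(-β-1) - (u+vⱼ)^(-β-1))` (`shiftRemainder`). With `F` a bound for `|f|` on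
`[u, u+V]`, both corrections are small: `|W u| = O(F/u)` and `|ψ u| = O(F/u²)`. Integrating `ψ`
from a large `a` gives `sup_[a,U] |f| ≤ K + c · sup_[a,U+V] |f|` with `c` as small as we like;
iterating this `k` times against the a priori exponential growth of `f` leaves an error
`cᵏ e^{μ(U+kV)} → 0`, so `f` is bounded. Then `ψ` is integrable at infinity and `W → 0`, hence
`f u = f a - W a + W u + ∫_a^u ψ` converges.
-/

open MeasureTheory Filter Set

/-- `q : ℝ → ℂ` solves the advanced-argument equation (E+):
`q` is differentiable at every `u > 0` and
`u·q′(u) = ∑_{j=0}^m α_j q(u + v_j)` for all `u > 0`. -/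
def SolvesEplus (m : ℕ) (v : ℕ → ℝ) (α : ℕ → ℂ) (q : ℝ → ℂ) : Prop :=
  ∀ u : ℝ, 0 < u → DifferentiableAt ℝ q u ∧
    (u : ℂ) * deriv q u = ∑ j ∈ Finset.range (m + 1), α j * q (u + v j)

open Topology Asymptotics

lemma hasDerivAt_ofReal_cpow_const_of_pos {x : ℝ} (hx : 0 < x) (c : ℂ) :
    HasDerivAt (fun t : ℝ => (t : ℂ) ^ c) (c * (x : ℂ) ^ (c - 1)) x := by
  simpa using (Complex.hasStrictDerivAt_cpow_const (c := c)
    (Complex.ofReal_mem_slitPlane.2 hx)).hasDerivAt.comp_ofReal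

lemma continuousOn_ofReal_cpow_const (c : ℂ) :
    ContinuousOn (fun t : ℝ => (t : ℂ) ^ c) (Ioi 0) :=
  fun x hx => (Complex.continuousAt_ofReal_cpow_const x c (Or.inr hx.ne')).continuousWithinAt

lemma rpow_le_two_rpow_abs_mul {t s : ℝ} (ht : 0 < t) (hts : t ≤ s) (hs : s ≤ 2 * t) (p : ℝ) :
    s ^ p ≤ 2 ^ |p| * t ^ p := by
  rcases le_total 0 p with hp | hp
  · calc s ^ p ≤ (2 * t) ^ p := Real.rpow_le_rpow (by linarith) hs hp
      _ = 2 ^ p * t ^ p := Real.mul_rpow zero_le_two ht.le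
      _ ≤ 2 ^ |p| * t ^ p := by gcongr; exacts [one_le_two, le_abs_self p]
  · calc s ^ p ≤ t ^ p := Real.rpow_le_rpow_of_nonpos ht hts hp
      _ ≤ 2 ^ |p| * t ^ p :=
        le_mul_of_one_le_left (by positivity) (Real.one_le_rpow one_le_two (abs_nonneg p))

lemma rpow_le_exp_abs_mul {t : ℝ} (ht : 1 ≤ t) (p : ℝ) : t ^ p ≤ Real.exp (|p| * t) :=
  calc t ^ p ≤ t ^ |p| := Real.rpow_le_rpow_of_exponent_le ht (le_abs_self p)
    _ = Real.exp (|p| * Real.log t) := by rw [Real.rpow_def_of_pos (by linarith), mul_comm]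
    _ ≤ Real.exp (|p| * t) := by gcongr; exact Real.log_le_self (by linarith)

lemma norm_ofReal_add_cpow_sub_le {t h : ℝ} (ht : 0 < t) (hh : 0 ≤ h) (hht : h ≤ t) (γ : ℂ) :
    ‖((t + h : ℝ) : ℂ) ^ γ - (t : ℂ) ^ γ‖ ≤ ‖γ‖ * (2 ^ |γ.re - 1| * t ^ (γ.re - 1)) * h := by
  have hderiv : ∀ s ∈ Icc t (t + h), HasDerivWithinAt (fun s : ℝ => (s : ℂ) ^ γ)
      (γ * (s : ℂ) ^ (γ - 1)) (Icc t (t + h)) s :=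
    fun s hs => (hasDerivAt_ofReal_cpow_const_of_pos (ht.trans_le hs.1) γ).hasDerivWithinAt
  have hbound : ∀ s ∈ Icc t (t + h),
      ‖γ * (s : ℂ) ^ (γ - 1)‖ ≤ ‖γ‖ * (2 ^ |γ.re - 1| * t ^ (γ.re - 1)) := by
    intro s hs
    rw [norm_mul, Complex.norm_cpow_eq_rpow_re_of_pos (ht.trans_le hs.1), Complex.sub_re,
      Complex.one_re]
    gcongr
    exact rpow_le_two_rpow_abs_mul ht hs.1 (by linarith [hs.2]) _
  simpa [abs_of_nonneg hh] using (convex_Icc t (t + h)).norm_image_sub_le_of_norm_hasDerivWithin_le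
    hderiv hbound (left_mem_Icc.2 (by linarith)) (right_mem_Icc.2 (by linarith))

lemma hasDerivAt_intervalIntegral_self_add {E : Type*} [NormedAddCommGroup E] [NormedSpace ℝ E]
    [CompleteSpace E] {φ : ℝ → E} (hφ : ContinuousOn φ (Ioi 0)) {h u : ℝ} (hh : 0 ≤ h)
    (hu : 0 < u) :
    HasDerivAt (fun x => ∫ t in x..x + h, φ t) (φ (u + h) - φ u) u := by
  have hint : ∀ a b : ℝ, 0 < a → 0 < b → IntervalIntegrable φ volume a b := fun a b ha hb =>
    (hφ.mono (ordConnected_Ioi.uIcc_subset ha hb)).intervalIntegrable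
  have hG : ∀ y, 0 < y → HasDerivAt (fun y => ∫ t in u..y, φ t) (φ y) y := fun y hy =>
    intervalIntegral.integral_hasDerivAt_right (hint u y hu hy)
      (hφ.stronglyMeasurableAtFilter isOpen_Ioi y hy) (hφ.continuousAt (Ioi_mem_nhds hy))
  refine (((hG (u + h) (by linarith)).comp_add_const u h).sub (hG u hu)).congr_of_eventuallyEq ?_
  filter_upwards [Ioi_mem_nhds hu] with x hx
  exact (intervalIntegral.integral_interval_sub_left (hint u (x + h) hu (by simp at hx; linarith))
    (hint u x hu hx)).symm

section ShiftEquation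

variable {ι : Type*} (s : Finset ι) (α : ι → ℂ) (v : ι → ℝ) (β : ℂ) (q : ℝ → ℂ)

noncomputable def shiftWindow (x : ℝ) : ℂ :=
  ∑ j ∈ s, α j * ∫ t in x..x + v j, (t : ℂ) ^ (-β - 1) * q t

noncomputable def shiftRemainder (t : ℝ) : ℂ :=
  ∑ j ∈ s, α j * q (t + v j) * ((t : ℂ) ^ (-β - 1) - ((t + v j : ℝ) : ℂ) ^ (-β - 1))

variable {s α v β q}

lemma continuousOn_shiftRemainder (hv : ∀ j ∈ s, 0 ≤ v j) (hq : ContinuousOn q (Ioi 0)) :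
    ContinuousOn (shiftRemainder s α v β q) (Ioi 0) := by
  refine continuousOn_finsetSum _ fun j hj => ?_
  have hshift : MapsTo (fun t => t + v j) (Ioi 0) (Ioi 0) := fun t ht => by
    simp only [mem_Ioi] at ht ⊢; linarith [hv j hj]
  have hadd : ContinuousOn (fun t : ℝ => t + v j) (Ioi 0) := by fun_prop
  exact (continuousOn_const.mul (hq.comp hadd hshift)).mul
    ((continuousOn_ofReal_cpow_const _).sub
      ((continuousOn_ofReal_cpow_const _).comp hadd hshift))

lemma hasDerivAt_mul_cpow_sub_shiftWindow (hv : ∀ j ∈ s, 0 ≤ v j) (hβ : ∑ j ∈ s, α j = β)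
    (hq : ContinuousOn q (Ioi 0)) {u : ℝ} (hu : 0 < u) (hqu : DifferentiableAt ℝ q u)
    (heq : (u : ℂ) * deriv q u = ∑ j ∈ s, α j * q (u + v j)) :
    HasDerivAt (fun x => q x * (x : ℂ) ^ (-β) - shiftWindow s α v β q x)
      (shiftRemainder s α v β q u) u := by
  have hφ : ContinuousOn (fun t : ℝ => (t : ℂ) ^ (-β - 1) * q t) (Ioi 0) :=
    (continuousOn_ofReal_cpow_const _).mul hq
  have hW : HasDerivAt (shiftWindow s α v β q)
      (∑ j ∈ s, α j * ((((u + v j : ℝ) : ℂ) ^ (-β - 1) * q (u + v j)) - (u : ℂ) ^ (-β - 1) * q u))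
      u :=
    HasDerivAt.fun_sum fun j hj =>
      (hasDerivAt_intervalIntegral_self_add hφ (hv j hj) hu).const_mul (α j)
  have hf := hqu.hasDerivAt.mul (hasDerivAt_ofReal_cpow_const_of_pos hu (-β))
  suffices shiftRemainder s α v β q u = deriv q u * (u : ℂ) ^ (-β) + q u * (-β * (u : ℂ) ^ (-β - 1))
      - ∑ j ∈ s, α j * ((((u + v j : ℝ) : ℂ) ^ (-β - 1) * q (u + v j)) - (u : ℂ) ^ (-β - 1) * q u)
    from this ▸ hf.sub hW
  have hu0 : (u : ℂ) ≠ 0 := Complex.ofReal_ne_zero.2 hu.ne'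
  have hsplit : (u : ℂ) ^ (-β) = (u : ℂ) ^ (-β - 1) * u := by
    rw [Complex.cpow_sub _ _ hu0, Complex.cpow_one, div_mul_cancel₀ _ hu0]
  have hβu : q u * (-β * (u : ℂ) ^ (-β - 1)) = ∑ j ∈ s, -(α j * ((u : ℂ) ^ (-β - 1) * q u)) := by
    rw [Finset.sum_neg_distrib, ← Finset.sum_mul, hβ]; ring
  rw [hsplit, show deriv q u * ((u : ℂ) ^ (-β - 1) * u) = (u : ℂ) ^ (-β - 1) * (u * deriv q u)
    by ring, heq, hβu, Finset.mul_sum, ← Finset.sum_add_distrib, ← Finset.sum_sub_distrib]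
  exact Finset.sum_congr rfl fun j _ => by ring

end ShiftEquation

lemma norm_eq_rpow_mul_norm_mul_cpow {x : ℝ} (hx : 0 < x) (β z : ℂ) :
    ‖z‖ = x ^ β.re * ‖z * (x : ℂ) ^ (-β)‖ := by
  rw [norm_mul, Complex.norm_cpow_eq_rpow_re_of_pos hx, Complex.neg_re, Real.rpow_neg hx.le,
    mul_left_comm, mul_inv_cancel₀ (by positivity), mul_one]

lemma norm_ofReal_cpow_neg_sub_one_mul {x : ℝ} (hx : 0 < x) (β z : ℂ) :
    ‖(x : ℂ) ^ (-β - 1) * z‖ = ‖z * (x : ℂ) ^ (-β)‖ / x := by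
  rw [Complex.cpow_sub _ _ (Complex.ofReal_ne_zero.2 hx.ne'), Complex.cpow_one, norm_mul,
    norm_mul, norm_div, Complex.norm_real, Real.norm_of_nonneg hx.le]
  ring

lemma norm_integral_le_div_of_norm_le_rpow_neg_two {E : Type*} [NormedAddCommGroup E]
    [NormedSpace ℝ E] {g : ℝ → E} {a u D : ℝ} (ha : 0 < a) (hau : a ≤ u) (hD : 0 ≤ D)
    (hg : ∀ t ∈ Ioc a u, ‖g t‖ ≤ D * t ^ (-2 : ℝ)) :
    ‖∫ t in a..u, g t‖ ≤ D / a := by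
  have h0 : (0 : ℝ) ∉ uIcc a u := notMem_uIcc_of_lt ha (ha.trans_le hau)
  calc ‖∫ t in a..u, g t‖ ≤ ∫ t in a..u, D * t ^ (-2 : ℝ) :=
        intervalIntegral.norm_integral_le_of_norm_le hau (ae_of_all _ hg)
          ((intervalIntegral.intervalIntegrable_rpow (Or.inr h0)).const_mul D)
    _ = D * (a⁻¹ - u⁻¹) := by
        rw [intervalIntegral.integral_const_mul, integral_rpow (Or.inr ⟨by norm_num, h0⟩)]
        congr 1
        norm_num [Real.rpow_neg_one]
        ring
    _ ≤ D / a := by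
        rw [div_eq_mul_inv]
        gcongr
        linarith [inv_nonneg.2 (ha.le.trans hau)]

section ShiftBounds

variable {ι : Type*} {s : Finset ι} {α : ι → ℂ} {v : ι → ℝ} {β : ℂ} {q : ℝ → ℂ} {V F : ℝ}

lemma norm_shiftWindow_le (hv : ∀ j ∈ s, 0 ≤ v j ∧ v j ≤ V) {u : ℝ} (hu : 0 < u) (hF0 : 0 ≤ F)
    (hF : ∀ t ∈ Icc u (u + V), ‖q t * (t : ℂ) ^ (-β)‖ ≤ F) :
    ‖shiftWindow s α v β q u‖ ≤ (∑ j ∈ s, ‖α j‖) * V * F / u := by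
  rw [mul_assoc, mul_div_assoc, Finset.sum_mul]
  refine (norm_sum_le _ _).trans (Finset.sum_le_sum fun j hj => ?_)
  obtain ⟨hv0, hvV⟩ := hv j hj
  rw [norm_mul]
  gcongr
  calc ‖∫ t in u..u + v j, (t : ℂ) ^ (-β - 1) * q t‖ ≤ F / u * |u + v j - u| := by
        refine intervalIntegral.norm_integral_le_of_norm_le_const fun t ht => ?_
        rw [uIoc_of_le (by linarith)] at ht
        rw [norm_ofReal_cpow_neg_sub_one_mul (hu.trans ht.1)]
        exact div_le_div₀ hF0 (hF t ⟨ht.1.le, by linarith [ht.2]⟩) hu ht.1.le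
    _ ≤ V * F / u := by
        rw [add_sub_cancel_left, abs_of_nonneg hv0, mul_comm, mul_div_assoc]
        gcongr

lemma norm_shiftRemainder_le (hv : ∀ j ∈ s, 0 ≤ v j ∧ v j ≤ V) {t : ℝ} (ht : 0 < t) (hVt : V ≤ t)
    (hF0 : 0 ≤ F) (hF : ∀ x ∈ Icc t (t + V), ‖q x * (x : ℂ) ^ (-β)‖ ≤ F) :
    ‖shiftRemainder s α v β q t‖ ≤
      (∑ j ∈ s, ‖α j‖) * V * ‖β + 1‖ * 2 ^ (|β.re| + |β.re + 2|) * F * t ^ (-2 : ℝ) := by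
  refine (norm_sum_le _ _).trans ((Finset.sum_le_sum (g := fun j =>
    ‖α j‖ * (V * ‖β + 1‖ * 2 ^ (|β.re| + |β.re + 2|) * F * t ^ (-2 : ℝ))) fun j hj => ?_).trans_eq
      (by rw [← Finset.sum_mul]; ring))
  obtain ⟨hv0, hvV⟩ := hv j hj
  have hq : ‖q (t + v j)‖ ≤ 2 ^ |β.re| * t ^ β.re * F := by
    rw [norm_eq_rpow_mul_norm_mul_cpow (x := t + v j) (by linarith) β]
    exact mul_le_mul (rpow_le_two_rpow_abs_mul (s := t + v j) ht (by linarith) (by linarith) _)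
      (hF _ ⟨by linarith, by linarith⟩) (norm_nonneg _) (by positivity)
  have hdiff : ‖(t : ℂ) ^ (-β - 1) - ((t + v j : ℝ) : ℂ) ^ (-β - 1)‖ ≤
      ‖β + 1‖ * (2 ^ |β.re + 2| * t ^ (-(β.re + 2))) * V := by
    have hre : (-β - 1).re - 1 = -(β.re + 2) := by simp; ring
    rw [norm_sub_rev]
    refine (norm_ofReal_add_cpow_sub_le ht hv0 (hvV.trans hVt) _).trans ?_
    rw [hre, abs_neg, ← neg_add', norm_neg]
    gcongr
  calc ‖α j * q (t + v j) * ((t : ℂ) ^ (-β - 1) - ((t + v j : ℝ) : ℂ) ^ (-β - 1))‖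
      ≤ ‖α j‖ * (2 ^ |β.re| * t ^ β.re * F) *
          (‖β + 1‖ * (2 ^ |β.re + 2| * t ^ (-(β.re + 2))) * V) := by
        rw [norm_mul, norm_mul]
        gcongr
    _ = ‖α j‖ * (V * ‖β + 1‖ * 2 ^ (|β.re| + |β.re + 2|) * F * t ^ (-2 : ℝ)) := by
        rw [Real.rpow_add two_pos, show (-2 : ℝ) = β.re + -(β.re + 2) by ring,
          Real.rpow_add ht]
        ring

end ShiftBounds

lemma le_two_mul_of_le_add_mul_of_le_exp {g : ℝ → ℝ} {a V K c B μ : ℝ} (hV : 0 ≤ V) (hK : 0 ≤ K)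
    (hc : 0 ≤ c) (hB : 0 ≤ B) (hμ : 0 ≤ μ) (hcμ : c * Real.exp (μ * V) ≤ 1 / 2)
    (hgrowth : ∀ t, a ≤ t → g t ≤ B * Real.exp (μ * t))
    (hrec : ∀ u, a ≤ u → ∀ F, 0 ≤ F → (∀ t ∈ Icc a (u + V), g t ≤ F) → g u ≤ K + c * F)
    {t : ℝ} (ht : a ≤ t) : g t ≤ 2 * K := by
  set ρ := c * Real.exp (μ * V)
  have hc2 : c ≤ 1 / 2 :=
    (le_mul_of_one_le_right hc (Real.one_le_exp (by positivity))).trans hcμ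
  have hiter : ∀ k : ℕ, ∀ u, a ≤ u → g u ≤ 2 * K + B * Real.exp (μ * u) * ρ ^ k := by
    intro k
    induction k with
    | zero => intro u hu; simpa using (hgrowth u hu).trans (by linarith)
    | succ k ih =>
      intro u hu
      have hF : ∀ x ∈ Icc a (u + V), g x ≤ 2 * K + B * Real.exp (μ * (u + V)) * ρ ^ k :=
        fun x hx => (ih x hx.1).trans (add_le_add_right (by gcongr; exact hx.2) _)
      have hshift :
          c * (B * Real.exp (μ * (u + V)) * ρ ^ k) = B * Real.exp (μ * u) * ρ ^ (k + 1) := by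
        rw [mul_add, Real.exp_add, pow_succ]; ring
      nlinarith [hrec u hu _ (by positivity) hF]
  have hlim : Tendsto (fun k : ℕ => 2 * K + B * Real.exp (μ * t) * ρ ^ k) atTop (𝓝 (2 * K)) := by
    simpa using tendsto_const_nhds.add ((tendsto_pow_atTop_nhds_zero_of_lt_one (by positivity)
      (by linarith)).const_mul (B * Real.exp (μ * t)))
  exact ge_of_tendsto' hlim fun k => hiter k t ht

lemma exists_norm_mul_cpow_le_exp {q : ℝ → ℂ} {lam : ℝ}
    (hq : q =O[atTop] fun u => Real.exp (lam * u)) (β : ℂ) :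
    ∃ B, 0 ≤ B ∧ ∃ a, ∀ t, a ≤ t →
      ‖q t * (t : ℂ) ^ (-β)‖ ≤ B * Real.exp ((|lam| + |β.re|) * t) := by
  obtain ⟨B, hB, hqB⟩ := hq.exists_nonneg
  obtain ⟨a, ha⟩ := eventually_atTop.1 (hqB.bound.and (eventually_ge_atTop 1))
  refine ⟨B, hB, a, fun t ht => ?_⟩
  obtain ⟨hqt, ht1⟩ := ha t ht
  rw [Real.norm_of_nonneg (Real.exp_pos _).le] at hqt
  rw [norm_mul, Complex.norm_cpow_eq_rpow_re_of_pos (by linarith), Complex.neg_re, add_mul,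
    Real.exp_add, ← mul_assoc]
  gcongr
  · exact hqt.trans (by gcongr; exact le_abs_self _)
  · simpa using rpow_le_exp_abs_mul ht1 (-β.re)

namespace SolvesEplus

variable {m : ℕ} {v : ℕ → ℝ} {α : ℕ → ℂ} {q : ℝ → ℂ} {β : ℂ} {V : ℝ}

lemma continuousOn (hq : SolvesEplus m v α q) : ContinuousOn q (Ioi 0) :=
  fun x hx => (hq x hx).1.continuousAt.continuousWithinAt

lemma mul_cpow_eq (hq : SolvesEplus m v α q) (hv : ∀ j ∈ Finset.range (m + 1), 0 ≤ v j)
    (hβ : ∑ j ∈ Finset.range (m + 1), α j = β) {a u : ℝ} (ha : 0 < a) (hau : a ≤ u) :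
    q u * (u : ℂ) ^ (-β) = (q a * (a : ℂ) ^ (-β) - shiftWindow (Finset.range (m + 1)) α v β q a)
      + shiftWindow (Finset.range (m + 1)) α v β q u
      + ∫ t in a..u, shiftRemainder (Finset.range (m + 1)) α v β q t := by
  have hpos : ∀ x ∈ uIcc a u, 0 < x := fun x hx => ha.trans_le (by
    rw [uIcc_of_le hau] at hx; exact hx.1)
  rw [intervalIntegral.integral_eq_sub_of_hasDerivAt
    (fun x hx => hasDerivAt_mul_cpow_sub_shiftWindow hv hβ hq.continuousOn (hpos x hx)
      (hq x (hpos x hx)).1 (hq x (hpos x hx)).2)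
    ((continuousOn_shiftRemainder hv hq.continuousOn).mono hpos).intervalIntegrable]
  ring

lemma norm_mul_cpow_le_add (hq : SolvesEplus m v α q)
    (hv : ∀ j ∈ Finset.range (m + 1), 0 ≤ v j ∧ v j ≤ V)
    (hβ : ∑ j ∈ Finset.range (m + 1), α j = β) {a u F : ℝ} (ha : 0 < a) (hVa : V ≤ a)
    (hau : a ≤ u) (hF0 : 0 ≤ F) (hF : ∀ t ∈ Icc a (u + V), ‖q t * (t : ℂ) ^ (-β)‖ ≤ F) :
    ‖q u * (u : ℂ) ^ (-β)‖ ≤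
      ‖q a * (a : ℂ) ^ (-β) - shiftWindow (Finset.range (m + 1)) α v β q a‖
        + (∑ j ∈ Finset.range (m + 1), ‖α j‖) * V * (1 + ‖β + 1‖ * 2 ^ (|β.re| + |β.re + 2|))
          * F / a := by
  set S := ∑ j ∈ Finset.range (m + 1), ‖α j‖
  have hS : 0 ≤ S := Finset.sum_nonneg fun j _ => norm_nonneg _
  have hV : 0 ≤ V := (hv 0 (by simp)).1.trans (hv 0 (by simp)).2
  have hW := norm_shiftWindow_le (α := α) hv (ha.trans_le hau) hF0
    fun t ht => hF t ⟨hau.trans ht.1, ht.2⟩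
  have hψ := norm_integral_le_div_of_norm_le_rpow_neg_two ha hau (by positivity)
    fun t ht => norm_shiftRemainder_le (α := α) hv (ha.trans ht.1) (hVa.trans ht.1.le) hF0
      fun x hx => hF x ⟨ht.1.le.trans hx.1, by linarith [hx.2, ht.2]⟩
  have hWa : S * V * F / u ≤ S * V * F / a := by gcongr
  rw [hq.mul_cpow_eq (fun j hj => (hv j hj).1) hβ ha hau]
  calc _ ≤ _ := norm_add₃_le
    _ ≤ _ := add_le_add (add_le_add_right (hW.trans hWa) _) hψ
    _ = _ := by ring

lemma exists_norm_mul_cpow_le (hq : SolvesEplus m v α q)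
    (hv : ∀ j ∈ Finset.range (m + 1), 0 ≤ v j ∧ v j ≤ V)
    (hβ : ∑ j ∈ Finset.range (m + 1), α j = β) {lam : ℝ}
    (hgrowth : q =O[atTop] fun u => Real.exp (lam * u)) :
    ∃ a M : ℝ, ∀ t, a ≤ t → ‖q t * (t : ℂ) ^ (-β)‖ ≤ M := by
  set C := (∑ j ∈ Finset.range (m + 1), ‖α j‖) * V * (1 + ‖β + 1‖ * 2 ^ (|β.re| + |β.re + 2|))
  have hV : 0 ≤ V := (hv 0 (by simp)).1.trans (hv 0 (by simp)).2
  have hC : 0 ≤ C := by positivity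
  obtain ⟨B, hB, a₀, hexp⟩ := exists_norm_mul_cpow_le_exp hgrowth β
  set μ := |lam| + |β.re|
  set a := max (max a₀ 1) (max V (2 * C * Real.exp (μ * V)))
  have ha₀ : a₀ ≤ a := le_max_of_le_left (le_max_left _ _)
  have ha : 0 < a := zero_lt_one.trans_le (le_max_of_le_left (le_max_right _ _))
  have hVa : V ≤ a := le_max_of_le_right (le_max_left _ _)
  have hCa : C / a * Real.exp (μ * V) ≤ 1 / 2 := by
    have : 2 * C * Real.exp (μ * V) ≤ a := le_max_of_le_right (le_max_right _ _)
    rw [div_mul_eq_mul_div, div_le_iff₀ ha]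
    linarith
  set K := ‖q a * (a : ℂ) ^ (-β) - shiftWindow (Finset.range (m + 1)) α v β q a‖
  refine ⟨a, 2 * K, fun t ht => le_two_mul_of_le_add_mul_of_le_exp hV (norm_nonneg _)
    (by positivity) hB (by positivity) hCa (fun t ht => hexp t (ha₀.trans ht)) (fun u hu F hF0 hF => ?_) ht⟩
  exact (hq.norm_mul_cpow_le_add hv hβ ha hVa hu hF0 hF).trans_eq (by ring)

lemma tendsto_mul_cpow_of_bounded (hq : SolvesEplus m v α q)
    (hv : ∀ j ∈ Finset.range (m + 1), 0 ≤ v j ∧ v j ≤ V)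
    (hβ : ∑ j ∈ Finset.range (m + 1), α j = β) {a₀ M : ℝ}
    (hM : ∀ t, a₀ ≤ t → ‖q t * (t : ℂ) ^ (-β)‖ ≤ M) :
    ∃ A, Tendsto (fun u : ℝ => q u * (u : ℂ) ^ (-β)) atTop (𝓝 A) := by
  set a := max a₀ (max V 1)
  have ha : 0 < a := zero_lt_one.trans_le (le_max_of_le_right (le_max_right _ _))
  have hVa : V ≤ a := le_max_of_le_right (le_max_left _ _)
  have hM' : ∀ t, a ≤ t → ‖q t * (t : ℂ) ^ (-β)‖ ≤ M :=
    fun t ht => hM t ((le_max_left _ _).trans ht)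
  have hM0 : 0 ≤ M := (norm_nonneg _).trans (hM' a le_rfl)
  set C := (∑ j ∈ Finset.range (m + 1), ‖α j‖) * V * ‖β + 1‖ * 2 ^ (|β.re| + |β.re + 2|)
  have hψ : IntegrableOn (shiftRemainder (Finset.range (m + 1)) α v β q) (Ioi a) := by
    have hdom := (integrableOn_Ioi_rpow_of_lt (by norm_num : (-2 : ℝ) < -1) ha).const_mul (C * M)
    have hψc : ContinuousOn (shiftRemainder (Finset.range (m + 1)) α v β q) (Ioi a) :=
      (continuousOn_shiftRemainder (fun j hj => (hv j hj).1) hq.continuousOn).mono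
        (Ioi_subset_Ioi ha.le)
    refine hdom.mono' (hψc.aestronglyMeasurable measurableSet_Ioi)
      (ae_restrict_of_forall_mem measurableSet_Ioi fun t ht => ?_)
    exact norm_shiftRemainder_le hv (ha.trans ht) (hVa.trans ht.le) hM0
      fun x hx => hM' x ((le_of_lt ht).trans hx.1)
  have hW : Tendsto (shiftWindow (Finset.range (m + 1)) α v β q) atTop (𝓝 0) := by
    refine squeeze_zero_norm' (a := fun u => (∑ j ∈ Finset.range (m + 1), ‖α j‖) * V * M / u) ?_
      (tendsto_const_nhds.div_atTop tendsto_id)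
    filter_upwards [eventually_ge_atTop a] with u hu
    exact norm_shiftWindow_le hv (ha.trans_le hu) hM0 fun t ht => hM' t (hu.trans ht.1)
  have hlim := ((tendsto_const_nhds (x := q a * (a : ℂ) ^ (-β)
    - shiftWindow (Finset.range (m + 1)) α v β q a)).add hW).add
      (intervalIntegral_tendsto_integral_Ioi a hψ tendsto_id)
  refine ⟨_, hlim.congr' ?_⟩
  filter_upwards [eventually_ge_atTop a] with u hu
  exact (hq.mul_cpow_eq (fun j hj => (hv j hj).1) hβ ha hu).symm

end SolvesEplus

theorem stmt18_general (m : ℕ) (v : ℕ → ℝ) (α : ℕ → ℂ)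
    (hv0 : v 0 = 0) (hv : ∀ i, i < m → v i < v (i + 1))
    (q : ℝ → ℂ) (hq : SolvesEplus m v α q)
    (lam B u₀ : ℝ)
    (hbound : ∀ u : ℝ, u₀ ≤ u → ‖q u‖ ≤ B * Real.exp (lam * u)) :
    ∃ A : ℂ, Tendsto (fun u : ℝ => q u * (u : ℂ) ^ (-(∑ j ∈ Finset.range (m + 1), α j)))
      atTop (nhds A) := by
  have hmono : MonotoneOn v (Iic m) := monotoneOn_of_le_succ ordConnected_Iic
    fun j _ _ hj => (hv j (Order.succ_le_iff.mp hj)).le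
  have hv' : ∀ j ∈ Finset.range (m + 1), 0 ≤ v j ∧ v j ≤ v m := fun j hj => by
    have hjm : j ∈ Iic m := Nat.lt_succ_iff.1 (Finset.mem_range.1 hj)
    exact ⟨hv0 ▸ hmono (Nat.zero_le m) hjm (Nat.zero_le j), hmono hjm self_mem_Iic hjm⟩
  have hgrowth : q =O[atTop] fun u => Real.exp (lam * u) :=
    IsBigO.of_bound B (eventually_atTop.2 ⟨u₀, fun u hu => by
      simpa [abs_of_pos (Real.exp_pos _)] using hbound u hu⟩)
  obtain ⟨a, M, hM⟩ := hq.exists_norm_mul_cpow_le hv' rfl hgrowth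
  exact hq.tendsto_mul_cpow_of_bounded hv' rfl hM

theorem stmt18 (m : ℕ) (v : ℕ → ℝ) (α : ℕ → ℂ)
    (hv0 : v 0 = 0) (hv : ∀ i, i < m → v i < v (i + 1))
    (hα : ∀ j, 1 ≤ j → j ≤ m → α j ≠ 0)
    (q : ℝ → ℂ) (hq : SolvesEplus m v α q)
    (lam B u₀ : ℝ) (hlam : 0 < lam) (hB : 0 < B) (hu₀ : 0 < u₀)
    (hbound : ∀ u : ℝ, u₀ ≤ u → ‖q u‖ ≤ B * Real.exp (lam * u)) :
    ∃ A : ℂ, Tendsto (fun u : ℝ => q u * (u : ℂ) ^ (-(∑ j ∈ Finset.range (m + 1), α j)))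
      atTop (nhds A) :=
  stmt18_general m v α hv0 hv q hq lam B u₀ hbound
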